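/- arXiv:1501.05737 — 2 statements merged into one kernel-verified Lean document; each statement's English description precedes it below -/
import Mathlib

section
/- Let g₁,...,g_N ∈ L²(Γ) (for Γ a measure space of positive measure) and let B be their Gram matrix, B(i,j) = ⟨gᵢ, gⱼ⟩. Let λ₁ < ... < λ_N and γ₁ < ... < γ_N be reals with γₖ ≠ λᵢ for all k,i, and let Λₖ be the diagonal matrix with entries 1/(γₖ - λᵢ). Assume that for almost every x, gᵢ(x) ≠ 0 for all i. Then B₁ + ... + B_N is invertible, where Bₖ = Λₖ B Λₖ. -/
/-!
For `v` in the kernel of `∑ₖ Λₖ B Λₖ`, the quadratic form gives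
`0 = ∑ₖ ∫ (∑ᵢ vᵢ gᵢ / (γₖ - λᵢ))²`, so at almost every `x` the vector `(vᵢ gᵢ(x))ᵢ` lies in the
kernel of the Cauchy matrix `(1 / (γₖ - λᵢ))ₖᵢ`. That kernel is trivial: `∑ᵢ uᵢ / (z - λᵢ)`
times `∏ᵢ (z - λᵢ)` is a polynomial of degree `< N` vanishing at the `N` points `γₖ`, and its
value at `λᵢ` is a nonzero multiple of `uᵢ`. As `gᵢ(x) ≠ 0` at some such `x`, `v = 0`.
-/

open Matrix MeasureTheory

open Finset Lagrange Polynomial in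
theorem eq_zero_of_forall_sum_div_sub_eq_zero {F ι : Type*} [Field F] [Fintype ι]
    {l ga : ι → F} (hl : Function.Injective l) (hga : Function.Injective ga)
    (hne : ∀ k i, ga k ≠ l i) {u : ι → F} (h : ∀ k, ∑ i, u i / (ga k - l i) = 0) : u = 0 := by
  classical
  have hw : ∀ i, nodalWeight univ l i ≠ 0 := fun i => nodalWeight_ne_zero hl.injOn (mem_univ i)
  set r := fun i => u i / nodalWeight univ l i
  have hP : interpolate univ l r = 0 := by
    refine eq_zero_of_degree_lt_of_eval_index_eq_zero univ hga.injOn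
      (degree_interpolate_lt _ hl.injOn) fun k _ => ?_
    have hsum : ∑ i, nodalWeight univ l i * (ga k - l i)⁻¹ * r i = ∑ i, u i / (ga k - l i) :=
      sum_congr rfl fun i _ => by simp only [r]; field_simp [hw i]
    rw [eval_interpolate_not_at_node _ fun i _ => hne k i, hsum, h k, mul_zero]
  funext i
  have hri := eval_interpolate_at_node r hl.injOn (mem_univ i)
  rw [hP, eval_zero, eq_comm, div_eq_zero_iff] at hri
  exact hri.resolve_right (hw i)

theorem dotProduct_diagonal_mul_mul_diagonal_mulVec {n α : Type*} [Fintype n] [DecidableEq n]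
    [CommSemiring α] (d v : n → α) (A : Matrix n n α) :
    v ⬝ᵥ (diagonal d * A * diagonal d) *ᵥ v = (d * v) ⬝ᵥ A *ᵥ (d * v) := by
  have hdv : diagonal d *ᵥ v = d * v := funext fun i => mulVec_diagonal d v i
  have hvd : v ᵥ* diagonal d = d * v :=
    funext fun i => (vecMul_diagonal v d i).trans (mul_comm _ _)
  rw [← mulVec_mulVec, ← mulVec_mulVec, hdv, dotProduct_mulVec, hvd]

namespace MeasureTheory

variable {ι Γ : Type*} [Fintype ι] [MeasurableSpace Γ] {μ : Measure Γ}

noncomputable def integralGram (μ : Measure Γ) (g : ι → Γ → ℝ) : Matrix ι ι ℝ :=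
  Matrix.of fun i j => ∫ x, g i x * g j x ∂μ

theorem dotProduct_integralGram_mulVec {g : ι → Γ → ℝ} (hg : ∀ i, MemLp (g i) 2 μ)
    (u : ι → ℝ) : u ⬝ᵥ integralGram μ g *ᵥ u = ∫ x, (∑ i, u i * g i x) ^ 2 ∂μ := by
  have hint : ∀ i j, Integrable (fun x => u i * u j * (g i x * g j x)) μ :=
    fun i j => ((hg i).integrable_mul (hg j)).const_mul _
  calc u ⬝ᵥ integralGram μ g *ᵥ u
      = ∑ i, ∑ j, ∫ x, u i * u j * (g i x * g j x) ∂μ := by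
        simp only [integralGram, dotProduct, mulVec, of_apply, integral_const_mul,
          Finset.mul_sum]
        exact Finset.sum_congr rfl fun i _ => Finset.sum_congr rfl fun j _ => by ring
    _ = ∫ x, ∑ i, ∑ j, u i * u j * (g i x * g j x) ∂μ := by
        rw [integral_finsetSum _ fun i _ => integrable_finsetSum _ fun j _ => hint i j]
        exact Finset.sum_congr rfl fun i _ => (integral_finsetSum _ fun j _ => hint i j).symm
    _ = ∫ x, (∑ i, u i * g i x) ^ 2 ∂μ := by
        congr 1 with x
        rw [sq, Finset.sum_mul_sum]
        exact Finset.sum_congr rfl fun i _ => Finset.sum_congr rfl fun j _ => by ring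

theorem ae_forall_eq_zero_of_sum_integral_sq_eq_zero {f : ι → Γ → ℝ}
    (hf : ∀ k, MemLp (f k) 2 μ) (h : ∑ k, ∫ x, f k x ^ 2 ∂μ = 0) :
    ∀ᵐ x ∂μ, ∀ k, f k x = 0 := by
  have hk := (Finset.sum_eq_zero_iff_of_nonneg fun k _ =>
    integral_nonneg fun x => sq_nonneg (f k x)).mp h
  refine ae_all_iff.mpr fun k => ?_
  filter_upwards [(integral_eq_zero_iff_of_nonneg (fun x => sq_nonneg (f k x))
    (hf k).integrable_sq).mp (hk k (Finset.mem_univ k))] with x hx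
  exact pow_eq_zero_iff two_ne_zero |>.mp hx

end MeasureTheory

theorem gram_scaled_sum_invertible {Γ : Type*} [MeasurableSpace Γ]
    (μ : Measure Γ) (hμ : 0 < μ Set.univ)
    (N : ℕ) (g : Fin N → Γ → ℝ) (hg : ∀ i, MemLp (g i) 2 μ)
    (l ga : Fin N → ℝ) (hl : StrictMono l) (hga : StrictMono ga)
    (hne : ∀ k i, ga k ≠ l i)
    (hnz : ∀ᵐ x ∂μ, ∀ i, g i x ≠ 0)
    (B : Matrix (Fin N) (Fin N) ℝ)
    (hBdef : ∀ i j, B i j = ∫ x, g i x * g j x ∂μ)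
    (L : Fin N → Matrix (Fin N) (Fin N) ℝ)
    (hLdef : ∀ k, L k = Matrix.diagonal fun i => 1 / (ga k - l i)) :
    IsUnit (∑ k, L k * B * L k).det := by
  obtain rfl : B = integralGram μ g := Matrix.ext hBdef
  rw [isUnit_iff_ne_zero]
  intro hdet
  obtain ⟨v, hv, hMv⟩ := exists_mulVec_eq_zero_iff.mpr hdet
  set f : Fin N → Γ → ℝ := fun k x => ∑ i, 1 / (ga k - l i) * v i * g i x
  have hquad : ∑ k, ∫ x, f k x ^ 2 ∂μ = 0 := by
    rw [← dotProduct_zero v, ← hMv, sum_mulVec, dotProduct_sum]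
    simp only [hLdef, dotProduct_diagonal_mul_mul_diagonal_mulVec,
      dotProduct_integralGram_mulVec hg, Pi.mul_apply, f]
  have hf : ∀ k, MemLp (f k) 2 μ := fun k => memLp_finsetSum _ fun i _ => (hg i).const_mul _
  have : (ae μ).NeBot := ae_neBot.mpr fun h => by simp [h] at hμ
  obtain ⟨x, hfx, hgx⟩ := ((ae_forall_eq_zero_of_sum_integral_sq_eq_zero hf hquad).and hnz).exists
  have hvg : (fun i => v i * g i x) = 0 :=
    eq_zero_of_forall_sum_div_sub_eq_zero hl.injective hga.injective hne fun k => by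
      rw [← hfx k]
      exact Finset.sum_congr rfl fun i _ => by ring
  exact hv (funext fun i => (mul_eq_zero.mp (congrFun hvg i)).resolve_right (hgx i))
end

section
/- Let Z : [0,∞) → ℝ^N be differentiable, let γ₁ < γ₂ < ... < γ_N be positive reals, let B₂,...,B_N be positive semidefinite symmetric N×N matrices, let A be symmetric positive definite, and suppose Z satisfies Z'(t) = -γ₁ Z(t) + ∑_{k=2}^N (γ₁ - γₖ) Bₖ A Z(t) for all t ≥ 0. Then ‖A^{1/2}Z(t)‖² ≤ e^{-2γ₁ t}‖A^{1/2}Z(0)‖² for all t ≥ 0. -/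
/-!
Along a solution, `f(t) = ⟪Z t, A Z t⟫ = ‖A^{1/2} Z t‖²` satisfies
`f' = 2⟪Z', A Z⟫ = -2γ₁ f + 2 ∑ₖ (γ₁ - γₖ) ⟪Bₖ (A Z), A Z⟫ ≤ -2γ₁ f`,
because each `Bₖ` is positive semidefinite and each `γ₁ - γₖ ≤ 0`.
Grönwall's inequality then gives `f(t) ≤ e^{-2γ₁ t} f(0)`.
-/

open Matrix Set Real

variable {n : Type*} [Fintype n]

theorem HasDerivAt.dotProduct {f g : ℝ → n → ℝ} {f' g' : n → ℝ} {t : ℝ}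
    (hf : HasDerivAt f f' t) (hg : HasDerivAt g g' t) :
    HasDerivAt (fun s => f s ⬝ᵥ g s) (f' ⬝ᵥ g t + f t ⬝ᵥ g') t := by
  have hfg := HasDerivAt.fun_sum fun i (_ : i ∈ Finset.univ) =>
    (hasDerivAt_pi.mp hf i).fun_mul (hasDerivAt_pi.mp hg i)
  rwa [Finset.sum_add_distrib] at hfg

theorem HasDerivAt.mulVec (A : Matrix n n ℝ) {f : ℝ → n → ℝ} {f' : n → ℝ} {t : ℝ}
    (hf : HasDerivAt f f' t) : HasDerivAt (fun s => A *ᵥ f s) (A *ᵥ f') t :=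
  (LinearMap.toContinuousLinearMap A.mulVecLin).hasFDerivAt.comp_hasDerivAt t hf

theorem Matrix.IsSymm.hasDerivAt_dotProduct_mulVec {A : Matrix n n ℝ} (hA : A.IsSymm)
    {f : ℝ → n → ℝ} {f' : n → ℝ} {t : ℝ} (hf : HasDerivAt f f' t) :
    HasDerivAt (fun s => f s ⬝ᵥ A *ᵥ f s) (2 * (f' ⬝ᵥ A *ᵥ f t)) t := by
  convert hf.dotProduct (hf.mulVec A) using 1
  rw [dotProduct_mulVec, ← mulVec_transpose, hA.eq, dotProduct_comm]
  ring

theorem Matrix.IsSymm.mulVec_dotProduct_mulVec_self {S A : Matrix n n ℝ} (hS : S.IsSymm)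
    (hSS : S * S = A) (v : n → ℝ) : S *ᵥ v ⬝ᵥ S *ᵥ v = v ⬝ᵥ A *ᵥ v := by
  rw [dotProduct_mulVec, ← mulVec_transpose, hS.eq, mulVec_mulVec, hSS, dotProduct_comm]

theorem Matrix.PosSemidef.mul_mulVec_dotProduct_mulVec_nonneg {B : Matrix n n ℝ}
    (hB : B.PosSemidef) (A : Matrix n n ℝ) (v : n → ℝ) : 0 ≤ (B * A) *ᵥ v ⬝ᵥ A *ᵥ v := by
  simpa [← mulVec_mulVec, dotProduct_comm] using hB.dotProduct_mulVec_nonneg (A *ᵥ v)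

theorem dotProduct_mulVec_le_of_posSemidef {ι : Type*} (A : Matrix n n ℝ)
    (B : ι → Matrix n n ℝ) (s : Finset ι) (w : ι → ℝ)
    (hB : ∀ k ∈ s, (B k).PosSemidef) (hw : ∀ k ∈ s, w k ≤ 0) (c : ℝ) (v : n → ℝ) :
    (-c • v + ∑ k ∈ s, w k • (B k * A) *ᵥ v) ⬝ᵥ A *ᵥ v ≤ -c * (v ⬝ᵥ A *ᵥ v) := by
  have hsum : ∑ k ∈ s, w k * ((B k * A) *ᵥ v ⬝ᵥ A *ᵥ v) ≤ 0 :=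
    Finset.sum_nonpos fun k hk => mul_nonpos_of_nonpos_of_nonneg (hw k hk)
      ((hB k hk).mul_mulVec_dotProduct_mulVec_nonneg A v)
  simp only [add_dotProduct, sum_dotProduct, smul_dotProduct, smul_eq_mul]
  linarith

theorem le_exp_mul_of_hasDerivAt_le_mul {f f' : ℝ → ℝ} {K a : ℝ}
    (hf : ∀ t ≥ a, HasDerivAt f (f' t) t) (bound : ∀ t ≥ a, f' t ≤ K * f t) :
    ∀ t ≥ a, f t ≤ exp (K * (t - a)) * f a := by
  intro t ht
  have hcont : ContinuousOn f (Icc a t) := fun x hx =>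
    (hf x hx.1).continuousAt.continuousWithinAt
  have hgronwall := le_gronwallBound_of_liminf_deriv_right_le (ε := 0) hcont
    (fun x hx _ hr => (hf x hx.1).hasDerivWithinAt.liminf_right_slope_le hr) le_rfl
    (fun x hx => by simpa using bound x hx.1) t ⟨ht, le_rfl⟩
  rwa [gronwallBound_ε0, mul_comm] at hgronwall

theorem ode_weighted_decay_general (N : ℕ) (hN : 0 < N)
    (γ : Fin N → ℝ) (hγ : StrictMono γ)
    (B : Fin N → Matrix (Fin N) (Fin N) ℝ)
    (hB : ∀ k, k ≠ (⟨0, hN⟩ : Fin N) → (B k).PosSemidef)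
    (A S : Matrix (Fin N) (Fin N) ℝ)
    (hS : S.PosDef) (hSS : S * S = A)
    (Z : ℝ → Fin N → ℝ) (hZ : Differentiable ℝ Z)
    (hODE : ∀ t ≥ (0:ℝ), deriv Z t =
      -(γ ⟨0, hN⟩) • Z t +
        ∑ k ∈ Finset.univ \ {(⟨0, hN⟩ : Fin N)},
          (γ ⟨0, hN⟩ - γ k) • (B k * A).mulVec (Z t)) :
    ∀ t ≥ (0:ℝ),
      S.mulVec (Z t) ⬝ᵥ S.mulVec (Z t) ≤
        Real.exp (-2 * γ ⟨0, hN⟩ * t) * (S.mulVec (Z 0) ⬝ᵥ S.mulVec (Z 0)) := by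
  have hSsymm : S.IsSymm := isHermitian_iff_isSymm.mp hS.isHermitian
  have hAsymm : A.IsSymm := by
    simpa only [hSsymm.eq, hSS] using isSymm_mul_transpose_self S
  have hweights : ∀ k ∈ Finset.univ \ {(⟨0, hN⟩ : Fin N)}, γ ⟨0, hN⟩ - γ k ≤ 0 := fun k _ =>
    sub_nonpos.mpr (hγ.monotone (Fin.mk_le_of_le_val k.val.zero_le))
  have hbound : ∀ t ≥ (0:ℝ),
      2 * (deriv Z t ⬝ᵥ A *ᵥ Z t) ≤ -2 * γ ⟨0, hN⟩ * (Z t ⬝ᵥ A *ᵥ Z t) := by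
    intro t ht
    have hdissipation := dotProduct_mulVec_le_of_posSemidef A B _ _
      (fun k hk => hB k (Finset.notMem_singleton.mp (Finset.mem_sdiff.mp hk).2)) hweights
      (γ ⟨0, hN⟩) (Z t)
    rw [hODE t ht]
    linarith
  intro t ht
  simp only [hSsymm.mulVec_dotProduct_mulVec_self hSS]
  simpa using le_exp_mul_of_hasDerivAt_le_mul
    (fun s _ => hAsymm.hasDerivAt_dotProduct_mulVec (hZ s).hasDerivAt) hbound t ht

theorem ode_weighted_decay (N : ℕ) (hN : 0 < N)
    (γ : Fin N → ℝ) (hγ : StrictMono γ) (hγpos : ∀ k, 0 < γ k)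
    (B : Fin N → Matrix (Fin N) (Fin N) ℝ)
    (hB : ∀ k, k ≠ (⟨0, hN⟩ : Fin N) → (B k).PosSemidef)
    (A S : Matrix (Fin N) (Fin N) ℝ)
    (hA : A.PosDef) (hS : S.PosDef) (hSS : S * S = A)
    (Z : ℝ → Fin N → ℝ) (hZ : Differentiable ℝ Z)
    (hODE : ∀ t ≥ (0:ℝ), deriv Z t =
      -(γ ⟨0, hN⟩) • Z t +
        ∑ k ∈ Finset.univ \ {(⟨0, hN⟩ : Fin N)},
          (γ ⟨0, hN⟩ - γ k) • (B k * A).mulVec (Z t)) :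
    ∀ t ≥ (0:ℝ),
      S.mulVec (Z t) ⬝ᵥ S.mulVec (Z t) ≤
        Real.exp (-2 * γ ⟨0, hN⟩ * t) * (S.mulVec (Z 0) ⬝ᵥ S.mulVec (Z 0)) :=
  ode_weighted_decay_general N hN γ hγ B hB A S hS hSS Z hZ hODE
end
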